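/- If N is a normal subgroup of W_n and fΔ_k ∈ N, then every monomial element x^Λ Δ_k with pdeg(x^Λ Δ_k) ≤ pdeg(fΔ_k) belongs to N. -/

import Mathlib

open Equiv MvPolynomial

namespace Wreath

variable (p n : ℕ)

/-- The set of `pⁿ` points on which `W n` acts. -/
abbrev Pts := Fin n → ZMod p

/-- Truncation of a point: keep coordinates below `k`, zero out the rest. -/
def trunc (k : Fin n) (x : Pts p n) : Pts p n := fun j => if j < k then x j else 0

lemma trunc_update (k : Fin n) (x : Pts p n) (v : ZMod p) :
    trunc p n k (Function.update x k v) = trunc p n k x := by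
  funext j
  by_cases hj : j < k
  · simp [trunc, Function.update_of_ne (ne_of_lt hj), hj]
  · simp [trunc, hj]

/-- The permutation `FΔₖ` of `𝔽_pⁿ` sending `x` to `x - F(x₁,…,x_{k-1}) eₖ`. -/
def delta (k : Fin n) (F : Pts p n → ZMod p) : Equiv.Perm (Pts p n) where
  toFun x := Function.update x k (x k - F (trunc p n k x))
  invFun x := Function.update x k (x k + F (trunc p n k x))
  left_inv x := by
    simp only [trunc_update, Function.update_idem, Function.update_self,
      sub_add_cancel, Function.update_eq_self]
  right_inv x := by
    simp only [trunc_update, Function.update_idem, Function.update_self,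
      add_sub_cancel_right, Function.update_eq_self]

/-- A permutation of `𝔽_pⁿ` is triangular if the displacement of the `k`-th coordinate
only depends on the coordinates below `k`.  The triangular permutations form exactly the
iterated wreath product `W_n = ≀ⁿ 𝔽_p`, a Sylow `p`-subgroup of `Sym(pⁿ)`. -/
def Triangular (π : Equiv.Perm (Pts p n)) : Prop :=
  ∀ (k : Fin n) (x y : Pts p n), (∀ j : Fin n, j < k → x j = y j) →
    π x k - x k = π y k - y k

lemma Triangular.agree {π : Equiv.Perm (Pts p n)} (hπ : Triangular p n π) {k : Fin n}
    {x y : Pts p n} (h : ∀ j : Fin n, j < k → x j = y j) :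
    ∀ j : Fin n, j < k → π x j = π y j := by
  intro j hj
  have h2 := hπ j x y (fun i hi => h i (hi.trans hj))
  rw [h j hj] at h2
  exact sub_left_inj.mp h2

lemma Triangular.mul {π σ : Equiv.Perm (Pts p n)} (hπ : Triangular p n π)
    (hσ : Triangular p n σ) : Triangular p n (π * σ) := by
  intro k x y h
  have h1 := hπ k (σ x) (σ y) (hσ.agree p n h)
  have h2 := hσ k x y h
  simp only [Equiv.Perm.mul_apply]
  linear_combination h1 + h2

lemma Triangular.one : Triangular p n 1 := by
  intro k x y h
  simp [h k]

lemma Triangular.inv {π : Equiv.Perm (Pts p n)} (hπ : Triangular p n π) :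
    Triangular p n π⁻¹ := by
  intro k x y h
  have key : ∀ m : ℕ, ∀ j : Fin n, (j : ℕ) ≤ m → j < k → π⁻¹ x j = π⁻¹ y j := by
    intro m
    induction m with
    | zero =>
      intro j hj hjk
      have hb : ∀ i : Fin n, i < j → π⁻¹ x i = π⁻¹ y i := by
        intro i hi
        have hi' : (i : ℕ) < (j : ℕ) := hi
        omega
      have ht := hπ j (π⁻¹ x) (π⁻¹ y) hb
      simp only [Equiv.Perm.inv_def, Equiv.apply_symm_apply] at ht
      rw [h j hjk] at ht
      exact (sub_right_inj.mp ht)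
    | succ m ih =>
      intro j hj hjk
      have hb : ∀ i : Fin n, i < j → π⁻¹ x i = π⁻¹ y i := by
        intro i hi
        have hi' : (i : ℕ) < (j : ℕ) := hi
        exact ih i (by omega) (hi.trans hjk)
      have ht := hπ j (π⁻¹ x) (π⁻¹ y) hb
      simp only [Equiv.Perm.inv_def, Equiv.apply_symm_apply] at ht
      rw [h j hjk] at ht
      exact (sub_right_inj.mp ht)
  have hb : ∀ j : Fin n, j < k → π⁻¹ x j = π⁻¹ y j := fun j hj => key j j le_rfl hj
  have ht := hπ k (π⁻¹ x) (π⁻¹ y) hb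
  simp only [Equiv.Perm.inv_def, Equiv.apply_symm_apply] at ht
  linear_combination -ht

/-- The subgroup of triangular permutations fixing every coordinate `j` satisfying `P j`. -/
def WB (P : Fin n → Prop) : Subgroup (Equiv.Perm (Pts p n)) where
  carrier := {π | Triangular p n π ∧ ∀ (x : Pts p n) (j : Fin n), P j → π x j = x j}
  one_mem' := ⟨Triangular.one p n, by intro x j _; simp⟩
  mul_mem' := by
    rintro a b ⟨ha, ha'⟩ ⟨hb, hb'⟩
    refine ⟨ha.mul p n hb, ?_⟩
    intro x j hj
    simp only [Equiv.Perm.mul_apply]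
    rw [ha' (b x) j hj, hb' x j hj]
  inv_mem' := by
    rintro a ⟨ha, ha'⟩
    refine ⟨ha.inv p n, ?_⟩
    intro x j hj
    have h := ha' (a⁻¹ x) j hj
    rw [Equiv.Perm.inv_def, Equiv.apply_symm_apply] at h
    exact h.symm

/-- `W p n = ≀ⁿ 𝔽_p` : the iterated wreath product, realized as the group of all
triangular permutations of `𝔽_pⁿ`. -/
def W : Subgroup (Equiv.Perm (Pts p n)) := WB p n (fun _ => False)

/-- The `k`-th base subgroup `B_k` (elements `fΔₖ`, only the `k`-th coordinate moves). -/
def B (k : Fin n) : Subgroup (Equiv.Perm (Pts p n)) := WB p n (fun j => j ≠ k)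

/-- The "tail" subgroup `B_{m+1} ⋯ B_n` (0-indexed: coordinates `< m` are fixed). -/
def Btail (m : ℕ) : Subgroup (Equiv.Perm (Pts p n)) := WB p n (fun j => (j : ℕ) < m)

/-- `γ_i(W_n)` (paper indexing: `γ₁ = W_n`), as a subgroup of `Perm (𝔽_pⁿ)`. -/
def gammaP (i : ℕ) : Subgroup (Equiv.Perm (Pts p n)) :=
  Subgroup.map (W p n).subtype (Subgroup.lowerCentralSeries (⊤ : Subgroup ↥(W p n)) (i - 1))

/-- `Z_i(W_n)` (with `Z₀ = 1`), as a subgroup of `Perm (𝔽_pⁿ)`. -/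
def ZP (i : ℕ) : Subgroup (Equiv.Perm (Pts p n)) :=
  Subgroup.map (W p n).subtype (upperCentralSeries ↥(W p n) i)

/-- The element `fΔₖ` of the base subgroup `B_k` attached to a polynomial `f`. -/
noncomputable def elt (f : MvPolynomial (Fin n) (ZMod p)) (k : Fin n) : Equiv.Perm (Pts p n) :=
  delta p n k (fun t => eval t f)

/-- The monomial element `x^Λ Δₖ`. -/
noncomputable def monoElem (Λ : Fin n →₀ ℕ) (k : Fin n) : Equiv.Perm (Pts p n) :=
  elt p n (monomial Λ (1 : ZMod p)) k

/-- `pdeg(x^Λ) = Σ λⱼ pʲ` (coordinates 0-indexed). -/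
def pdegM (Λ : Fin n →₀ ℕ) : ℕ := ∑ j : Fin n, Λ j * p ^ (j : ℕ)

/-- `μₖ = p^{n-1} - p^k` (0-indexed `k`). -/
def mu (k : Fin n) : ℕ := p ^ (n - 1) - p ^ (k : ℕ)

/-- `pdeg(x^Λ Δₖ) = pdeg(x^Λ) + μₖ`. -/
def pdegMk (Λ : Fin n →₀ ℕ) (k : Fin n) : ℕ := pdegM p n Λ + mu p n k

/-- `pdeg(fΔₖ)`: maximum of the `pdeg` of the monomials of `f`, plus `μₖ`. -/
def pdegP (f : MvPolynomial (Fin n) (ZMod p)) (k : Fin n) : ℕ :=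
  f.support.sup (pdegM p n) + mu p n k

/-- `f` is a reduced polynomial: every variable appears with degree at most `p - 1`. -/
def Reduced (f : MvPolynomial (Fin n) (ZMod p)) : Prop :=
  ∀ Λ ∈ f.support, ∀ j : Fin n, Λ j ≤ p - 1

/-- `f` only involves the variables `xⱼ` with `j < k`. -/
def VarsLt (k : Fin n) (f : MvPolynomial (Fin n) (ZMod p)) : Prop :=
  ∀ Λ ∈ f.support, ∀ j : Fin n, Λ j ≠ 0 → j < k

/-- The normal closure of an element inside the group `W_n`: the smallest subgroup
containing `g` which is stable under conjugation by every element of `W_n`. -/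
def normalClosureIn (g : Equiv.Perm (Pts p n)) : Subgroup (Equiv.Perm (Pts p n)) :=
  sInf {S | g ∈ S ∧ ∀ w ∈ W p n, ∀ s ∈ S, w * s * w⁻¹ ∈ S}

/-- The canonical elementary abelian regular subgroup `T = ⟨Δ₁, …, Δₙ⟩`. -/
def T : Subgroup (Equiv.Perm (Pts p n)) :=
  Subgroup.closure (Set.range fun i : Fin n => delta p n i (fun _ => 1))

end Wreath

/-!
Let `S` be the set of polynomials `g` with `gΔₖ ∈ N`. It is an `𝔽_p`-subspace, and since
conjugation by `uΔⱼ` (`j < k`, `u` in the variables below `j`) substitutes `Xⱼ + u` for `Xⱼ`,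
it is stable under these substitutions. Induct on the `pdeg` of a leading monomial `x^Λ` of a
reduced `g ∈ S` in the variables below `k`. If `xⱼ` is the first variable of `x^Λ`, then
`g(Xⱼ + x₀^{p-1} ⋯ x_{j-1}^{p-1}) - g`, reduced with `x^p = x`, lies in `S` and has the leading
monomial `x^Λ xⱼ⁻¹ x₀^{p-1} ⋯ x_{j-1}^{p-1}` of `pdeg` one less, with coefficient `Λⱼ` times
that of `x^Λ`. By induction, every reduced monomial in the variables below `k` of smaller `pdeg`
lies in `S`; so do the lower terms of `g`, hence also `x^Λ`. Since `pdeg` reads off base-`p`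
digits, `x^Λ` is the only reduced monomial of its `pdeg`.
-/

namespace MvPolynomial

variable {R σ : Type*} [CommRing R] [DecidableEq σ]

lemma bind₁_update_X_monomial_of_notMem {j : σ} {M : σ →₀ ℕ} (hj : M j = 0)
    (q : MvPolynomial σ R) (c : R) :
    bind₁ (Function.update X j q) (monomial M c) = monomial M c := by
  rw [bind₁_monomial, monomial_eq]
  congr 1
  refine Finset.prod_congr rfl fun i hi => ?_
  rw [Function.update_of_ne (by rintro rfl; exact Finsupp.mem_support_iff.mp hi hj)]

lemma bind₁_update_X_add_monomial_monomial (j : σ) (ν M : σ →₀ ℕ) (c : R) :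
    bind₁ (Function.update X j (X j + monomial ν 1)) (monomial M c) =
      ∑ s ∈ Finset.range (M j + 1),
        monomial (M - Finsupp.single j s + s • ν) (c * (M j).choose s) := by
  have hsplit : monomial M c = monomial (M.erase j) c * X j ^ M j := by
    rw [X_pow_eq_monomial, monomial_mul, mul_one, Finsupp.erase_add_single]
  rw [hsplit, map_mul, bind₁_update_X_monomial_of_notMem (by simp), map_pow, bind₁_X_right,
    Function.update_self, add_comm, add_pow, Finset.mul_sum]
  refine Finset.sum_congr rfl fun s hs => ?_
  have hidx :
      M.erase j + (s • ν + Finsupp.single j (M j - s)) = M - Finsupp.single j s + s • ν := by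
    ext i
    rcases eq_or_ne i j with rfl | hij
    · simp; omega
    · simp [hij.symm, Finsupp.erase_ne hij]
  rw [monomial_pow, X_pow_eq_monomial, ← C_eq_coe_nat, C_apply, monomial_mul, monomial_mul,
    add_zero, ← hidx, one_pow, one_mul, one_mul, monomial_mul]

lemma bind₁_update_X_add_monomial_sub_self (j : σ) (ν : σ →₀ ℕ) (g : MvPolynomial σ R) :
    bind₁ (Function.update X j (X j + monomial ν 1)) g - g =
      ∑ M ∈ g.support, ∑ s ∈ Finset.range (M j),
        monomial (M - Finsupp.single j (s + 1) + (s + 1) • ν)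
          (coeff M g * (M j).choose (s + 1)) := by
  conv_lhs => rw [← support_sum_monomial_coeff g, map_sum, ← Finset.sum_sub_distrib]
  refine Finset.sum_congr rfl fun M _ => ?_
  rw [bind₁_update_X_add_monomial_monomial, Finset.sum_range_succ', add_sub_assoc]
  simp

lemma monomial_one_mem_of_mem_support {K : Type*} [Field K] {S : Submodule K (MvPolynomial σ K)}
    {g : MvPolynomial σ K} (hg : g ∈ S) {Λ : σ →₀ ℕ} (hΛ : Λ ∈ g.support)
    (hrest : ∀ M ∈ g.support, M ≠ Λ → monomial M 1 ∈ S) : monomial Λ 1 ∈ S := by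
  have hsplit :
      monomial Λ (coeff Λ g) = g - ∑ M ∈ g.support.erase Λ, coeff M g • monomial M 1 := by
    simp only [smul_monomial, smul_eq_mul, mul_one]
    rw [eq_sub_iff_add_eq, Finset.add_sum_erase _ (fun M => monomial M (coeff M g)) hΛ,
      support_sum_monomial_coeff]
  have hmem : monomial Λ (coeff Λ g) ∈ S := hsplit ▸ sub_mem hg (Submodule.sum_mem _ fun M hM =>
    Submodule.smul_mem _ _ (hrest M (Finset.mem_of_mem_erase hM) (Finset.ne_of_mem_erase hM)))
  simpa [smul_monomial, inv_mul_cancel₀ (mem_support_iff.mp hΛ)] using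
    Submodule.smul_mem _ (coeff Λ g)⁻¹ hmem

end MvPolynomial

namespace Wreath

variable {p n : ℕ}

@[simp]
lemma delta_apply (k : Fin n) (F : Pts p n → ZMod p) (x : Pts p n) :
    delta p n k F x = Function.update x k (x k - F (trunc p n k x)) := rfl

@[simp]
lemma delta_inv_apply (k : Fin n) (F : Pts p n → ZMod p) (x : Pts p n) :
    (delta p n k F)⁻¹ x = Function.update x k (x k + F (trunc p n k x)) := rfl

lemma delta_mul_delta (k : Fin n) (F G : Pts p n → ZMod p) :
    delta p n k F * delta p n k G = delta p n k (F + G) := by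
  ext x : 1
  simp only [Perm.mul_apply, delta_apply, trunc_update, Function.update_idem,
    Function.update_self, Pi.add_apply, sub_sub, add_comm]

lemma delta_zero (k : Fin n) : delta p n k 0 = 1 := by
  ext x : 1
  simp

lemma trunc_congr {k : Fin n} {x y : Pts p n} (h : ∀ j < k, x j = y j) :
    trunc p n k x = trunc p n k y := by
  funext j
  by_cases hj : j < k <;> simp [trunc, hj, h]

lemma delta_mem_W (j : Fin n) (F : Pts p n → ZMod p) : delta p n j F ∈ W p n := by
  refine ⟨fun i x y h => ?_, fun _ _ h => h.elim⟩
  rcases eq_or_ne i j with rfl | hij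
  · simp [trunc_congr h]
  · simp [Function.update_of_ne hij]

noncomputable def eltHom (k : Fin n) :
    Multiplicative (MvPolynomial (Fin n) (ZMod p)) →* Perm (Pts p n) where
  toFun f := elt p n f.toAdd k
  map_one' := by
    simp only [toAdd_one, elt, map_zero]
    exact delta_zero k
  map_mul' f g := by
    simp only [toAdd_mul, elt, map_add]
    exact (delta_mul_delta k _ _).symm

lemma elt_congr (k : Fin n) {f g : MvPolynomial (Fin n) (ZMod p)}
    (h : ∀ t : Pts p n, eval t f = eval t g) : elt p n f k = elt p n g k := by
  simp only [elt, funext h]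

noncomputable def eltSubmodule (k : Fin n) (N : Subgroup (Perm (Pts p n))) :
    Submodule (ZMod p) (MvPolynomial (Fin n) (ZMod p)) :=
  AddSubgroup.toZModSubmodule p (Subgroup.toAddSubgroup' (N.comap (eltHom k)))

lemma mem_eltSubmodule {k : Fin n} {N : Subgroup (Perm (Pts p n))}
    {f : MvPolynomial (Fin n) (ZMod p)} : f ∈ eltSubmodule k N ↔ elt p n f k ∈ N := Iff.rfl

lemma trunc_update_of_lt {j k : Fin n} (hjk : j < k) (x : Pts p n) (v : ZMod p) :
    trunc p n k (Function.update x j v) = Function.update (trunc p n k x) j v := by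
  funext i
  rcases eq_or_ne i j with rfl | hij
  · simp [trunc, hjk]
  · simp [trunc, Function.update_of_ne hij]

lemma eval_congr_of_varsLt {j : Fin n} {u : MvPolynomial (Fin n) (ZMod p)}
    (hu : VarsLt p n j u) {s t : Pts p n} (h : ∀ i < j, s i = t i) : eval s u = eval t u := by
  simp only [eval_eq]
  refine Finset.sum_congr rfl fun Λ hΛ => congrArg _ (Finset.prod_congr rfl fun i _ => ?_)
  by_cases hΛi : Λ i = 0
  · simp [hΛi]
  · rw [h i (hu Λ hΛ i hΛi)]

lemma delta_mul_elt_mul_inv {j k : Fin n} (hjk : j < k) {u : MvPolynomial (Fin n) (ZMod p)}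
    (hu : VarsLt p n j u) (f : MvPolynomial (Fin n) (ZMod p)) :
    delta p n j (fun t => eval t u) * elt p n f k * (delta p n j (fun t => eval t u))⁻¹ =
      elt p n (bind₁ (Function.update X j (X j + u)) f) k := by
  ext x : 1
  have hkj : k ≠ j := hjk.ne'
  set y := Function.update x j (x j + eval (trunc p n j x) u)
  have huj : eval (trunc p n j x) u = eval (trunc p n k x) u :=
    eval_congr_of_varsLt hu fun i hi => by simp [trunc, hi, hi.trans hjk]
  have heval : eval (trunc p n k y) f =
      eval (trunc p n k x) (bind₁ (Function.update X j (X j + u)) f) := by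
    rw [show ∀ t : Pts p n, eval t (bind₁ (Function.update X j (X j + u)) f) =
        eval (fun i => eval t (Function.update X j (X j + u) i)) f from
      fun t => eval₂Hom_bind₁ _ _ _ _, trunc_update_of_lt hjk]
    congr 2
    funext i
    rcases eq_or_ne i j with rfl | hij
    · simp [trunc, hjk, huj]
    · simp [Function.update_of_ne hij]
  have htrunc : trunc p n j (Function.update y k (y k - eval (trunc p n k y) f)) =
      trunc p n j x :=
    trunc_congr fun i hi => by
      simp [y, Function.update_of_ne (hi.trans hjk).ne, Function.update_of_ne hi.ne]
  simp only [Perm.mul_apply, delta_inv_apply, elt, delta_apply]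
  rw [htrunc, Function.update_of_ne hkj.symm]
  simp only [y, Function.update_self, Function.update_of_ne hkj, add_sub_cancel_right, heval]
  rw [Function.update_comm hkj, Function.update_idem, Function.update_eq_self]

lemma bind₁_mem_eltSubmodule {N : Subgroup (Perm (Pts p n))}
    (hN : ∀ w ∈ W p n, ∀ g ∈ N, w * g * w⁻¹ ∈ N) {j k : Fin n} (hjk : j < k)
    {u : MvPolynomial (Fin n) (ZMod p)} (hu : VarsLt p n j u)
    {f : MvPolynomial (Fin n) (ZMod p)} (hf : f ∈ eltSubmodule k N) :
    bind₁ (Function.update X j (X j + u)) f ∈ eltSubmodule k N := by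
  rw [mem_eltSubmodule, ← delta_mul_elt_mul_inv hjk hu]
  exact hN _ (delta_mem_W j _) _ hf

lemma pdegM_add (A B : Fin n →₀ ℕ) : pdegM p n (A + B) = pdegM p n A + pdegM p n B := by
  simp [pdegM, add_mul, Finset.sum_add_distrib]

lemma pdegM_smul (s : ℕ) (A : Fin n →₀ ℕ) : pdegM p n (s • A) = s * pdegM p n A := by
  simp [pdegM, Finset.mul_sum, mul_assoc]

lemma pdegM_single (j : Fin n) (t : ℕ) : pdegM p n (Finsupp.single j t) = t * p ^ (j : ℕ) := by
  simp [pdegM, Finsupp.single_apply]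

lemma pdegM_tsub_single {M : Fin n →₀ ℕ} {j : Fin n} {s : ℕ} (hs : s ≤ M j) :
    pdegM p n (M - Finsupp.single j s) + s * p ^ (j : ℕ) = pdegM p n M := by
  rw [← pdegM_single, ← pdegM_add, tsub_add_cancel_of_le (Finsupp.single_le_iff.mpr hs)]

lemma sum_mul_pow_eq_ofDigits (b : ℕ) : ∀ {n : ℕ} (a : Fin n → ℕ),
    ∑ i, a i * b ^ (i : ℕ) = Nat.ofDigits b (List.ofFn a)
  | 0, _ => by simp
  | n + 1, a => by
    rw [Fin.sum_univ_succ, List.ofFn_succ, Nat.ofDigits_cons, ← sum_mul_pow_eq_ofDigits b,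
      Finset.mul_sum]
    simp only [Fin.val_zero, pow_zero, mul_one, Fin.val_succ, pow_succ]
    congr 1
    exact Finset.sum_congr rfl fun i _ => by ring

lemma pdegM_injOn (hp : 1 < p) : Set.InjOn (pdegM p n) {Λ | ∀ j, Λ j ≤ p - 1} := by
  intro Λ hΛ M hM h
  simp only [pdegM, sum_mul_pow_eq_ofDigits] at h
  have hdigits := Nat.ofDigits_inj_of_len_eq hp (by simp)
    (by simpa [List.mem_ofFn] using fun j => (hΛ j).trans_lt (Nat.sub_lt (by omega) one_pos))
    (by simpa [List.mem_ofFn] using fun j => (hM j).trans_lt (Nat.sub_lt (by omega) one_pos)) h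
  exact DFunLike.coe_injective (List.ofFn_injective hdigits)

noncomputable def maxExpBelow (p : ℕ) (j : Fin n) : Fin n →₀ ℕ :=
  Finsupp.equivFunOnFinite.symm fun i => if i < j then p - 1 else 0

@[simp]
lemma maxExpBelow_apply (j i : Fin n) : maxExpBelow p j i = if i < j then p - 1 else 0 := rfl

lemma pdegM_maxExpBelow (hp : 0 < p) (j : Fin n) :
    pdegM p n (maxExpBelow p j) + 1 = p ^ (j : ℕ) := by
  have hsum : pdegM p n (maxExpBelow p j) = ∑ i ∈ Finset.range j, (p - 1) * p ^ i := by
    simp only [pdegM, maxExpBelow_apply, ite_mul, zero_mul, Fin.lt_def]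
    rw [Fin.sum_univ_eq_sum_range (fun m => if m < (j : ℕ) then (p - 1) * p ^ m else 0),
      ← Finset.sum_filter]
    congr 1
    ext m
    simp only [Finset.mem_filter, Finset.mem_range]
    omega
  obtain ⟨q, rfl⟩ : ∃ q, p = q + 1 := ⟨p - 1, by omega⟩
  rw [hsum, ← geom_sum_mul_add q j, Finset.sum_mul, Nat.add_sub_cancel]
  simp only [mul_comm]

lemma pdegM_tsub_single_add_smul_maxExpBelow (hp : 0 < p) {M : Fin n →₀ ℕ} {j : Fin n} {s : ℕ}
    (hs : s ≤ M j) :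
    pdegM p n (M - Finsupp.single j s + s • maxExpBelow p j) + s = pdegM p n M := by
  rw [pdegM_add, pdegM_smul, add_assoc, ← mul_add_one, pdegM_maxExpBelow hp,
    pdegM_tsub_single hs]

-- By Fermat, `x ^ (p - 1) = 1` for `x ≠ 0`; a positive exponent stays positive, so `0 ^ e`
-- is unchanged too.
def reduceExp (p e : ℕ) : ℕ := if e = 0 then 0 else (e - 1) % (p - 1) + 1

lemma reduceExp_le (e : ℕ) : reduceExp p e ≤ e := by
  unfold reduceExp
  split_ifs
  · omega
  · have := Nat.mod_le (e - 1) (p - 1)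
    omega

lemma reduceExp_le_pred (hp : 1 < p) (e : ℕ) : reduceExp p e ≤ p - 1 := by
  unfold reduceExp
  split_ifs
  · omega
  · have := Nat.mod_lt (e - 1) (show 0 < p - 1 by omega)
    omega

lemma reduceExp_eq_zero_iff {e : ℕ} : reduceExp p e = 0 ↔ e = 0 := by
  unfold reduceExp
  split_ifs with he <;> simp [he]

lemma reduceExp_of_le {e : ℕ} (h : e ≤ p - 1) : reduceExp p e = e := by
  unfold reduceExp
  split_ifs
  · omega
  · rw [Nat.mod_eq_of_lt (by omega)]
    omega

lemma pow_reduceExp [Fact p.Prime] (x : ZMod p) (e : ℕ) : x ^ reduceExp p e = x ^ e := by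
  unfold reduceExp
  split_ifs with he
  · rw [he]
  rcases eq_or_ne x 0 with rfl | hx
  · rw [zero_pow he, zero_pow (Nat.succ_ne_zero _)]
  have he' : e = (e - 1) % (p - 1) + 1 + (p - 1) * ((e - 1) / (p - 1)) := by
    have := Nat.mod_add_div (e - 1) (p - 1)
    omega
  conv_rhs => rw [he', pow_add, pow_mul, ZMod.pow_card_sub_one_eq_one hx, one_pow, mul_one]

noncomputable def reduceIdx (p : ℕ) (Λ : Fin n →₀ ℕ) : Fin n →₀ ℕ :=
  Λ.mapRange (reduceExp p) rfl

@[simp]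
lemma reduceIdx_apply (Λ : Fin n →₀ ℕ) (i : Fin n) : reduceIdx p Λ i = reduceExp p (Λ i) :=
  Finsupp.mapRange_apply

lemma reduceIdx_of_le {Λ : Fin n →₀ ℕ} (h : ∀ j, Λ j ≤ p - 1) : reduceIdx p Λ = Λ := by
  ext i
  simp [reduceExp_of_le (h i)]

lemma pdegM_reduceIdx_le (Λ : Fin n →₀ ℕ) : pdegM p n (reduceIdx p Λ) ≤ pdegM p n Λ :=
  Finset.sum_le_sum fun i _ => Nat.mul_le_mul_right _ (by simpa using reduceExp_le _)

lemma pdegM_reduceIdx_lt (hp : 0 < p) {Λ : Fin n →₀ ℕ} (h : reduceIdx p Λ ≠ Λ) :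
    pdegM p n (reduceIdx p Λ) < pdegM p n Λ := by
  obtain ⟨i, hi⟩ := Finsupp.ne_iff.mp h
  refine Finset.sum_lt_sum (fun i _ => Nat.mul_le_mul_right _ (by simpa using reduceExp_le _))
    ⟨i, Finset.mem_univ i, Nat.mul_lt_mul_of_lt_of_le ?_ le_rfl (pow_pos hp _)⟩
  exact lt_of_le_of_ne (by simpa using reduceExp_le _) hi

noncomputable def reduce (p : ℕ) (f : MvPolynomial (Fin n) (ZMod p)) :
    MvPolynomial (Fin n) (ZMod p) :=
  ∑ M ∈ f.support, monomial (reduceIdx p M) (coeff M f)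

lemma eval_reduce [Fact p.Prime] (t : Fin n → ZMod p) (f : MvPolynomial (Fin n) (ZMod p)) :
    eval t (reduce p f) = eval t f := by
  conv_rhs => rw [← support_sum_monomial_coeff f]
  simp only [reduce, map_sum, eval_monomial, Finsupp.prod_pow, reduceIdx_apply, pow_reduceExp]

lemma coeff_reduce (Λ : Fin n →₀ ℕ) (f : MvPolynomial (Fin n) (ZMod p)) :
    coeff Λ (reduce p f) = ∑ M ∈ f.support, if reduceIdx p M = Λ then coeff M f else 0 := by
  simp only [reduce, coeff_sum, coeff_monomial]

lemma exists_reduceIdx_eq_of_mem_support_reduce {Λ : Fin n →₀ ℕ}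
    {f : MvPolynomial (Fin n) (ZMod p)} (h : Λ ∈ (reduce p f).support) :
    ∃ M ∈ f.support, reduceIdx p M = Λ := by
  by_contra! hc
  exact mem_support_iff.mp h
    ((coeff_reduce Λ f).trans (Finset.sum_eq_zero fun M hM => if_neg (hc M hM)))

lemma coeff_reduce_of_pdegM_le (hp : 0 < p) {Λ : Fin n →₀ ℕ} (hΛ : ∀ j, Λ j ≤ p - 1)
    {f : MvPolynomial (Fin n) (ZMod p)} (hf : ∀ M ∈ f.support, pdegM p n M ≤ pdegM p n Λ) :
    coeff Λ (reduce p f) = coeff Λ f := by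
  have hfix : ∀ M ∈ f.support, reduceIdx p M = Λ → M = Λ := by
    intro M hM heq
    by_contra hne
    have := pdegM_reduceIdx_lt hp (heq.trans_ne (Ne.symm hne))
    rw [heq] at this
    exact absurd (hf M hM) (not_le.mpr this)
  rw [coeff_reduce, Finset.sum_congr rfl fun M hM => if_congr
    ⟨hfix M hM, fun h => by rw [h, reduceIdx_of_le hΛ]⟩ rfl rfl, Finset.sum_ite_eq']
  split_ifs with hΛf
  · rfl
  · exact (notMem_support_iff.mp hΛf).symm

lemma reduced_reduce (hp : 1 < p) (f : MvPolynomial (Fin n) (ZMod p)) :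
    Reduced p n (reduce p f) := by
  intro M hM i
  obtain ⟨M', -, rfl⟩ := exists_reduceIdx_eq_of_mem_support_reduce hM
  simpa using reduceExp_le_pred hp _

lemma varsLt_reduce {k : Fin n} {f : MvPolynomial (Fin n) (ZMod p)} (hf : VarsLt p n k f) :
    VarsLt p n k (reduce p f) := by
  intro M hM i hi
  obtain ⟨M', hM', rfl⟩ := exists_reduceIdx_eq_of_mem_support_reduce hM
  exact hf M' hM' i fun h => hi (by simpa using reduceExp_eq_zero_iff.mpr h)

lemma reduce_mem_eltSubmodule [Fact p.Prime] {k : Fin n} {N : Subgroup (Perm (Pts p n))}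
    {f : MvPolynomial (Fin n) (ZMod p)} (hf : f ∈ eltSubmodule k N) :
    reduce p f ∈ eltSubmodule k N := by
  rwa [mem_eltSubmodule, elt_congr k (eval_reduce · f)]

def IsPdegLeading (g : MvPolynomial (Fin n) (ZMod p)) (Λ : Fin n →₀ ℕ) : Prop :=
  Λ ∈ g.support ∧ ∀ M ∈ g.support, pdegM p n M ≤ pdegM p n Λ

lemma isPdegLeading_reduce (hp : 0 < p) {f : MvPolynomial (Fin n) (ZMod p)} {Λ : Fin n →₀ ℕ}
    (hΛ : ∀ j, Λ j ≤ p - 1) (hΛf : Λ ∈ f.support)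
    (hf : ∀ M ∈ f.support, pdegM p n M ≤ pdegM p n Λ) : IsPdegLeading (reduce p f) Λ := by
  refine ⟨?_, fun M hM => ?_⟩
  · rwa [mem_support_iff, coeff_reduce_of_pdegM_le hp hΛ hf, ← mem_support_iff]
  · obtain ⟨M', hM', rfl⟩ := exists_reduceIdx_eq_of_mem_support_reduce hM
    exact (pdegM_reduceIdx_le M').trans (hf M' hM')

lemma exists_of_mem_support_bind₁_sub {j : Fin n} {g : MvPolynomial (Fin n) (ZMod p)}
    {M₀ : Fin n →₀ ℕ}
    (hM₀ : M₀ ∈ (bind₁ (Function.update X j (X j + monomial (maxExpBelow p j) 1)) g - g).support) :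
    ∃ M ∈ g.support, ∃ s < M j,
      M - Finsupp.single j (s + 1) + (s + 1) • maxExpBelow p j = M₀ := by
  classical
  rw [bind₁_update_X_add_monomial_sub_self] at hM₀
  obtain ⟨M, hM, hM₀⟩ := Finset.mem_biUnion.mp (support_sum hM₀)
  obtain ⟨s, hs, hM₀⟩ := Finset.mem_biUnion.mp (support_sum hM₀)
  exact ⟨M, hM, s, Finset.mem_range.mp hs,
    (Finset.mem_singleton.mp (support_monomial_subset hM₀)).symm⟩

lemma coeff_bind₁_sub_of_isPdegLeading (hp : 1 < p) {g : MvPolynomial (Fin n) (ZMod p)}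
    (hred : Reduced p n g) {Λ : Fin n →₀ ℕ} (hΛ : IsPdegLeading g Λ) {j : Fin n} (hj : Λ j ≠ 0) :
    coeff (Λ - Finsupp.single j 1 + 1 • maxExpBelow p j)
        (bind₁ (Function.update X j (X j + monomial (maxExpBelow p j) 1)) g - g) =
      coeff Λ g * (Λ j : ZMod p) := by
  have huniq : ∀ M ∈ g.support, ∀ s < M j,
      M - Finsupp.single j (s + 1) + (s + 1) • maxExpBelow p j =
        Λ - Finsupp.single j 1 + 1 • maxExpBelow p j → M = Λ ∧ s = 0 := by
    intro M hM s hs heq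
    have h1 := pdegM_tsub_single_add_smul_maxExpBelow (p := p) (by omega) hs
    have h2 := pdegM_tsub_single_add_smul_maxExpBelow (p := p) (by omega)
      (Nat.one_le_iff_ne_zero.mpr hj)
    have h3 := hΛ.2 M hM
    rw [heq] at h1
    have hs0 : s = 0 := by omega
    exact ⟨pdegM_injOn hp (hred M hM) (hred Λ hΛ.1) (by omega), hs0⟩
  rw [bind₁_update_X_add_monomial_sub_self, coeff_sum,
    Finset.sum_eq_single_of_mem Λ hΛ.1 fun M hM hne => ?_, coeff_sum,
    Finset.sum_eq_single_of_mem 0 (Finset.mem_range.mpr (Nat.pos_of_ne_zero hj)) fun s hs hne => ?_]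
  · simp
  · exact (coeff_monomial _ _ _).trans
      (if_neg fun h => hne (huniq Λ hΛ.1 s (Finset.mem_range.mp hs) h).2)
  · rw [coeff_sum]
    exact Finset.sum_eq_zero fun s hs => (coeff_monomial _ _ _).trans
      (if_neg fun h => hne (huniq M hM s (Finset.mem_range.mp hs) h).1)

lemma varsLt_monomial_maxExpBelow (j : Fin n) :
    VarsLt p n j (monomial (maxExpBelow p j) (1 : ZMod p)) := fun M hM i hi => by
  rw [Finset.mem_singleton.mp (support_monomial_subset hM)] at hi
  by_contra hij
  simp [hij] at hi

lemma varsLt_bind₁_sub {j k : Fin n} (hjk : j < k) {g : MvPolynomial (Fin n) (ZMod p)}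
    (hg : VarsLt p n k g) :
    VarsLt p n k (bind₁ (Function.update X j (X j + monomial (maxExpBelow p j) 1)) g - g) := by
  intro M₀ hM₀ i hi
  obtain ⟨M, hM, s, -, rfl⟩ := exists_of_mem_support_bind₁_sub hM₀
  rcases lt_or_ge i j with hij | hji
  · exact hij.trans hjk
  · exact hg M hM i fun hMi => hi (by simp [hMi, not_lt.mpr hji])

lemma pdegM_le_of_mem_support_bind₁_sub (hp : 0 < p) {j : Fin n}
    {g : MvPolynomial (Fin n) (ZMod p)} {D : ℕ} (hg : ∀ M ∈ g.support, pdegM p n M ≤ D + 1)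
    {M₀ : Fin n →₀ ℕ}
    (hM₀ : M₀ ∈ (bind₁ (Function.update X j (X j + monomial (maxExpBelow p j) 1)) g - g).support) :
    pdegM p n M₀ ≤ D := by
  obtain ⟨M, hM, s, hs, rfl⟩ := exists_of_mem_support_bind₁_sub hM₀
  have := pdegM_tsub_single_add_smul_maxExpBelow (p := p) (s := s + 1) hp hs
  have := hg M hM
  omega

/-- In base `p`, the digits of `Λ - single j 1 + maxExpBelow p j` are those of `pdeg Λ - 1`. -/
lemma tsub_single_add_maxExpBelow_le {Λ : Fin n →₀ ℕ} (hΛ : ∀ i, Λ i ≤ p - 1) {j : Fin n}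
    (hj : Λ j ≠ 0) (hbelow : ∀ i < j, Λ i = 0) (i : Fin n) :
    (Λ - Finsupp.single j 1 + 1 • maxExpBelow p j : Fin n →₀ ℕ) i ≤ p - 1 := by
  have := hΛ i
  rcases lt_trichotomy i j with hij | rfl | hij
  · simp [hij, hbelow i hij]
  · simp; omega
  · simp [hij.ne', not_lt.mpr hij.le]; omega

lemma exists_isPdegLeading_pdegM_add_one_eq [Fact p.Prime] {k : Fin n}
    {N : Subgroup (Perm (Pts p n))} (hN : ∀ w ∈ W p n, ∀ g ∈ N, w * g * w⁻¹ ∈ N)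
    {g : MvPolynomial (Fin n) (ZMod p)} (hg : g ∈ eltSubmodule k N) (hred : Reduced p n g)
    (hvars : VarsLt p n k g) {Λ : Fin n →₀ ℕ} (hΛ : IsPdegLeading g Λ) (hΛ0 : Λ ≠ 0) :
    ∃ g₁ ∈ eltSubmodule k N, Reduced p n g₁ ∧ VarsLt p n k g₁ ∧
      ∃ Λ₁, IsPdegLeading g₁ Λ₁ ∧ pdegM p n Λ₁ + 1 = pdegM p n Λ := by
  have hp : 1 < p := (Fact.out : p.Prime).one_lt
  obtain ⟨j, hj, hjmin⟩ := Λ.support.exists_min_image id (Finsupp.support_nonempty_iff.mpr hΛ0)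
  rw [Finsupp.mem_support_iff] at hj
  have hbelow : ∀ i < j, Λ i = 0 := fun i hi => by
    by_contra h
    exact absurd (hjmin i (Finsupp.mem_support_iff.mpr h)) (not_le.mpr hi)
  have hjk : j < k := hvars Λ hΛ.1 j hj
  have hΛ₁ := pdegM_tsub_single_add_smul_maxExpBelow (p := p) (by omega)
    (Nat.one_le_iff_ne_zero.mpr hj)
  have hcoeff : (Λ j : ZMod p) ≠ 0 := by
    rw [Ne, ZMod.natCast_eq_zero_iff]
    exact Nat.not_dvd_of_pos_of_lt (Nat.pos_of_ne_zero hj) (by have := hred Λ hΛ.1 j; omega)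
  refine ⟨_, reduce_mem_eltSubmodule (sub_mem (bind₁_mem_eltSubmodule hN hjk
      (varsLt_monomial_maxExpBelow j) hg) hg), reduced_reduce hp _,
    varsLt_reduce (varsLt_bind₁_sub hjk hvars), _,
    isPdegLeading_reduce (by omega) (tsub_single_add_maxExpBelow_le (hred Λ hΛ.1) hj hbelow) ?_
      fun M hM => pdegM_le_of_mem_support_bind₁_sub (by omega) (fun M hM => hΛ₁ ▸ hΛ.2 M hM) hM,
    hΛ₁⟩
  rw [mem_support_iff, coeff_bind₁_sub_of_isPdegLeading hp hred hΛ hj]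
  exact mul_ne_zero (mem_support_iff.mp hΛ.1) hcoeff

theorem monomial_mem_eltSubmodule_of_isPdegLeading [Fact p.Prime] {k : Fin n}
    {N : Subgroup (Perm (Pts p n))} (hN : ∀ w ∈ W p n, ∀ g ∈ N, w * g * w⁻¹ ∈ N)
    {g : MvPolynomial (Fin n) (ZMod p)} (hg : g ∈ eltSubmodule k N) (hred : Reduced p n g)
    (hvars : VarsLt p n k g) {Λt : Fin n →₀ ℕ} (hΛt : IsPdegLeading g Λt)
    {Λ : Fin n →₀ ℕ} (hΛred : ∀ j, Λ j ≤ p - 1) (hΛvars : ∀ j, Λ j ≠ 0 → j < k)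
    (hΛ : pdegM p n Λ ≤ pdegM p n Λt) : monomial Λ (1 : ZMod p) ∈ eltSubmodule k N := by
  have hp : 1 < p := (Fact.out : p.Prime).one_lt
  obtain ⟨D, hD⟩ : ∃ D, pdegM p n Λt = D := ⟨_, rfl⟩
  induction D using Nat.strong_induction_on generalizing g Λt Λ with
  | _ D ih =>
    have hlower : ∀ Λ' : Fin n →₀ ℕ, (∀ j, Λ' j ≤ p - 1) → (∀ j, Λ' j ≠ 0 → j < k) →
        pdegM p n Λ' < pdegM p n Λt → monomial Λ' (1 : ZMod p) ∈ eltSubmodule k N := by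
      intro Λ' hred' hvars' hlt
      obtain ⟨g₁, hg₁, hred₁, hvars₁, Λ₁, hΛ₁, hdeg⟩ := exists_isPdegLeading_pdegM_add_one_eq hN hg
        hred hvars hΛt (by rintro rfl; simp [pdegM] at hlt)
      exact ih _ (by omega) hg₁ hred₁ hvars₁ hΛ₁ hred' hvars' (by omega) rfl
    rcases hΛ.lt_or_eq with hlt | heq
    · exact hlower Λ hΛred hΛvars hlt
    obtain rfl := pdegM_injOn hp hΛred (hred Λt hΛt.1) heq
    exact monomial_one_mem_of_mem_support hg hΛt.1 fun M hM hne =>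
      hlower M (hred M hM) (hvars M hM)
        ((hΛt.2 M hM).lt_of_ne fun h => hne (pdegM_injOn hp (hred M hM) hΛred h))

end Wreath

theorem normal_contains_smaller_monomials_general (p n : ℕ) (hp : p.Prime)
    (N : Subgroup (Equiv.Perm (Wreath.Pts p n)))
    (hNnorm : ∀ w ∈ Wreath.W p n, ∀ g ∈ N, w * g * w⁻¹ ∈ N)
    (f : MvPolynomial (Fin n) (ZMod p)) (k : Fin n) (hf0 : f ≠ 0)
    (hfr : Wreath.Reduced p n f) (hfv : Wreath.VarsLt p n k f)
    (hfN : Wreath.elt p n f k ∈ N) :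
    ∀ Λ : Fin n →₀ ℕ, (∀ j, Λ j ≤ p - 1) → (∀ j, Λ j ≠ 0 → j < k) →
      Wreath.pdegMk p n Λ k ≤ Wreath.pdegP p n f k → Wreath.monoElem p n Λ k ∈ N := by
  intro Λ hΛred hΛvars hle
  have := Fact.mk hp
  obtain ⟨Λt, hΛt, hsup⟩ :=
    f.support.exists_mem_eq_sup (support_nonempty.mpr hf0) (Wreath.pdegM p n)
  have hlead : Wreath.IsPdegLeading f Λt := ⟨hΛt, fun M hM => hsup ▸ Finset.le_sup hM⟩
  rw [Wreath.pdegMk, Wreath.pdegP, hsup, Nat.add_le_add_iff_right] at hle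
  exact Wreath.monomial_mem_eltSubmodule_of_isPdegLeading hNnorm hfN hfr hfv hlead hΛred hΛvars hle

/-- if `N ⊴ W_n` and `fΔₖ ∈ N`, then every monomial element `x^Λ Δₖ` with
`pdeg(x^Λ Δₖ) ≤ pdeg(fΔₖ)` belongs to `N`. -/
theorem normal_contains_smaller_monomials (p n : ℕ) (hp : p.Prime) (hodd : p ≠ 2)
    (N : Subgroup (Equiv.Perm (Wreath.Pts p n))) (hNW : N ≤ Wreath.W p n)
    (hNnorm : ∀ w ∈ Wreath.W p n, ∀ g ∈ N, w * g * w⁻¹ ∈ N)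
    (f : MvPolynomial (Fin n) (ZMod p)) (k : Fin n) (hf0 : f ≠ 0)
    (hfr : Wreath.Reduced p n f) (hfv : Wreath.VarsLt p n k f)
    (hfN : Wreath.elt p n f k ∈ N) :
    ∀ Λ : Fin n →₀ ℕ, (∀ j, Λ j ≤ p - 1) → (∀ j, Λ j ≠ 0 → j < k) →
      Wreath.pdegMk p n Λ k ≤ Wreath.pdegP p n f k → Wreath.monoElem p n Λ k ∈ N :=
  normal_contains_smaller_monomials_general p n hp N hNnorm f k hf0 hfr hfv hfN
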